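/- arXiv:2501.11789 — 2 statements merged into one kernel-verified Lean document; each statement's English description precedes it below -/
import Mathlib

section
/- Suppose (U'₁,U'₂,<') is the result of applying a case II coherent extended Nielsen transformation to a coherent extended word equation (U₁,U₂,<). If a boundary (i,j) cuts (i',j') with respect to (U'₁,U'₂,<'), then (i,ν(i,j)) cuts (i',ν(i',j')) with respect to (U₁,U₂,<). -/
/-!
Put `L'' = L' ∘ T`, where `L'` witnesses the coherence of `(U'₁, U'₂, <')`. Since
`T(U_i) = y U'_i`, the first `k` letters of `U_i` expand to `y` followed by the first `μ(k)`
letters of `U'_i`, so `L''`-lengths on the original side are `L'`-lengths on the new side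
shifted by `L'(y)`. Together with the compatibility of `<'` and `<` on `B'⁻` this makes `L''`
a coherence witness for `<`. Conversely, `ν(j)` is the letter of `U_i` from which the
`(j+1)`-st letter of `T(U_i)` comes, so the `L''`-lengths of `ν(j) - 1` and `ν(j)` bracket the
`L'`-lengths of `j - 1` and `j` shifted by `L'(y)`; hence both strict inequalities of a cut
survive the passage back through `ν`.
-/

open scoped Classical

namespace ExtWordEq

/-- The type of (candidate) boundary orders: relations on pairs (i,j). -/
abbrev BRel : Type := ℕ × ℕ → ℕ × ℕ → Prop

variable {X : Type*}

/-- The `i`-th side of the word equation (`i = 1` gives `U₁`, anything else `U₂`). -/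
def word (U₁ U₂ : List X) (i : ℕ) : List X := if i = 1 then U₁ else U₂

/-- The variable `U_{i,j}` (1-indexed), as an optional value. -/
def letter (U₁ U₂ : List X) (b : ℕ × ℕ) : Option X := (word U₁ U₂ b.1)[b.2 - 1]?

/-- `b` is a boundary of the word equation `(U₁, U₂)`. -/
def Boundary (U₁ U₂ : List X) (b : ℕ × ℕ) : Prop :=
  (b.1 = 1 ∨ b.1 = 2) ∧ 1 ≤ b.2 ∧ b.2 ≤ (word U₁ U₂ b.1).length

/-- `b` is a boundary of `(U₁, U₂)` or one of the conventional boundaries `(1,0)`, `(2,0)`. -/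
def EBoundary (U₁ U₂ : List X) (b : ℕ × ℕ) : Prop :=
  (b.1 = 1 ∨ b.1 = 2) ∧ b.2 ≤ (word U₁ U₂ b.1).length

/-- Incomparability `a ≈ b` for a strict order. -/
def Incomp (lt : BRel) (a b : ℕ × ℕ) : Prop := ¬ lt a b ∧ ¬ lt b a

/-- `lt` is a boundary order for the word equation `(U₁, U₂)`:
a strict weak order on the boundaries (together with the conventional boundaries
`(1,0) ≈ (2,0)`), extending `(i,j) < (i,j+1)` and with `(1,m) ≈ (2,n)`. -/
structure BoundaryOrder (U₁ U₂ : List X) (lt : BRel) : Prop where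
  irrefl : ∀ a, EBoundary U₁ U₂ a → ¬ lt a a
  trans : ∀ a b c, EBoundary U₁ U₂ a → EBoundary U₁ U₂ b → EBoundary U₁ U₂ c →
    lt a b → lt b c → lt a c
  incomp_trans : ∀ a b c, EBoundary U₁ U₂ a → EBoundary U₁ U₂ b → EBoundary U₁ U₂ c →
    Incomp lt a b → Incomp lt b c → Incomp lt a c
  succ : ∀ i j : ℕ, EBoundary U₁ U₂ (i, j + 1) → lt (i, j) (i, j + 1)
  top : Incomp lt (1, U₁.length) (2, U₂.length)
  bot : Incomp lt (1, 0) (2, 0)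

/-- `L(U_{i,1} U_{i,2} ⋯ U_{i,j})` where `L` is the additive extension of a length
assignment on variables. -/
def prefixLen (U₁ U₂ : List X) (L : X → ℕ) (b : ℕ × ℕ) : ℕ :=
  (((word U₁ U₂ b.1).take b.2).map L).sum

/-- The extended word equation `(U₁, U₂, lt)` is coherent. -/
def Coherent (U₁ U₂ : List X) (lt : BRel) : Prop :=
  ∃ L : X → ℕ, (∀ x, 0 < L x) ∧
    ∀ a b, Boundary U₁ U₂ a → Boundary U₁ U₂ b →
      (lt a b ↔ prefixLen U₁ U₂ L a < prefixLen U₁ U₂ L b)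

/-- The boundary `a` cuts the boundary `b`. -/
def Cuts (U₁ U₂ : List X) (lt : BRel) (a b : ℕ × ℕ) : Prop :=
  Boundary U₁ U₂ a ∧ Boundary U₁ U₂ b ∧ a ≠ b ∧
    lt (a.1, a.2 - 1) b ∧ lt (b.1, b.2 - 1) a

/-- The boundary `a` mirrors the boundary `b`. -/
def Mirrors (U₁ U₂ : List X) (lt : BRel) (a b : ℕ × ℕ) : Prop :=
  Boundary U₁ U₂ a ∧ Boundary U₁ U₂ b ∧ letter U₁ U₂ a = letter U₁ U₂ b ∧
    (¬ Incomp lt a b ∨ ¬ Incomp lt (a.1, a.2 - 1) (b.1, b.2 - 1))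

/-- Edge relation of the cut graph `G_{U₁,U₂,<}`. -/
def CutEdge (U₁ U₂ : List X) (lt : BRel) (a b : ℕ × ℕ) : Prop :=
  ∃ c, Cuts U₁ U₂ lt a c ∧ Mirrors U₁ U₂ lt c b

/-- `w 0, w 1, …, w n` is a cycle (of length `n ≥ 1`) in the cut graph. -/
def IsCycle (U₁ U₂ : List X) (lt : BRel) (n : ℕ) (w : ℕ → ℕ × ℕ) : Prop :=
  0 < n ∧ w n = w 0 ∧ ∀ k < n, CutEdge U₁ U₂ lt (w k) (w (k + 1))

/-- The cut graph `G_{U₁,U₂,<}` is acyclic. -/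
def Acyclic (U₁ U₂ : List X) (lt : BRel) : Prop :=
  ¬ ∃ n w, IsCycle U₁ U₂ lt n w

variable [DecidableEq X]

/-- Case I extended Nielsen transformation (here `x = U_{1,1}`, `y = U_{2,1}`,
and `T(y) = x`). -/
def NielsenI (U₁ U₂ : List X) (lt : BRel) (U₁' U₂' : List X) (lt' : BRel) : Prop :=
  ∃ x y : X, U₁.head? = some x ∧ U₂.head? = some y ∧
    Incomp lt (1, 1) (2, 1) ∧
    U₁' = (U₁.map fun z => if z = y then x else z).tail ∧
    U₂' = (U₂.map fun z => if z = y then x else z).tail ∧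
    BoundaryOrder U₁' U₂' lt' ∧
    ∀ a b : ℕ × ℕ, EBoundary U₁' U₂' a → EBoundary U₁' U₂' b →
      (lt' a b ↔ lt (a.1, a.2 + 1) (b.1, b.2 + 1))

/-- The substitution `T(x) = y x` (identity on other variables), applied to a word. -/
def expand (x y : X) (l : List X) : List X :=
  l.flatMap fun z => if z = x then [y, x] else [z]

/-- The map `μ(i,j) = j + #{j' ≤ j : U_{i,j'} = x} − 1` (as a map on boundaries),
where `x = U_{1,1}`. -/
def mu (U₁ U₂ : List X) (x : X) (b : ℕ × ℕ) : ℕ × ℕ :=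
  (b.1, b.2 + ((word U₁ U₂ b.1).take b.2).count x - 1)

/-- The map `ν(i,j) = j − #{j' ≤ j : U'_{i,j'} = x} + 1` (as a map on boundaries),
where `x = U_{1,1}`. -/
def nu (U₁' U₂' : List X) (x : X) (b : ℕ × ℕ) : ℕ × ℕ :=
  (b.1, b.2 - ((word U₁' U₂' b.1).take b.2).count x + 1)

/-- Membership in `B⁻ = B ∖ {(2,1)}`. -/
def Bminus (U₁ U₂ : List X) (b : ℕ × ℕ) : Prop := Boundary U₁ U₂ b ∧ b ≠ (2, 1)

/-- Membership in `B'⁻ = {(i, μ(i,j)) : (i,j) ∈ B⁻}` (`x = U_{1,1}`). -/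
def Bpminus (U₁ U₂ : List X) (x : X) (b' : ℕ × ℕ) : Prop :=
  ∃ b, Bminus U₁ U₂ b ∧ mu U₁ U₂ x b = b'

/-- Case II extended Nielsen transformation, with the heads `x = U_{1,1}`,
`y = U_{2,1}` made explicit. -/
def NielsenIIxy (U₁ U₂ : List X) (lt : BRel) (U₁' U₂' : List X) (lt' : BRel)
    (x y : X) : Prop :=
  U₁.head? = some x ∧ U₂.head? = some y ∧
  lt (2, 1) (1, 1) ∧
  U₁' = (expand x y U₁).tail ∧
  U₂' = (expand x y U₂).tail ∧
  BoundaryOrder U₁' U₂' lt' ∧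
  ∀ a b, Bpminus U₁ U₂ x a → Bpminus U₁ U₂ x b →
    (lt' a b ↔ lt (nu U₁' U₂' x a) (nu U₁' U₂' x b))

/-- Case II extended Nielsen transformation. -/
def NielsenII (U₁ U₂ : List X) (lt : BRel) (U₁' U₂' : List X) (lt' : BRel) : Prop :=
  ∃ x y : X, NielsenIIxy U₁ U₂ lt U₁' U₂' lt' x y

/-- The dual boundary order. -/
def dualRel (lt : BRel) : BRel := fun a b => lt (3 - a.1, a.2) (3 - b.1, b.2)

/-- Case III extended Nielsen transformation: case II applied to the dual,
then dualized back. -/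
def NielsenIII (U₁ U₂ : List X) (lt : BRel) (U₁' U₂' : List X) (lt' : BRel) : Prop :=
  NielsenII U₂ U₁ (dualRel lt) U₂' U₁' (dualRel lt')

/-- `(U₁', U₂', lt')` is an extended Nielsen transformation of the nontrivial coherent
extended word equation `(U₁, U₂, lt)`. -/
def ExtNielsen (U₁ U₂ : List X) (lt : BRel) (U₁' U₂' : List X) (lt' : BRel) : Prop :=
  U₁ ≠ [] ∧ U₂ ≠ [] ∧ BoundaryOrder U₁ U₂ lt ∧ Coherent U₁ U₂ lt ∧
    (NielsenI U₁ U₂ lt U₁' U₂' lt' ∨ NielsenII U₁ U₂ lt U₁' U₂' lt' ∨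
      NielsenIII U₁ U₂ lt U₁' U₂' lt')

/-- A coherent extended Nielsen transformation. -/
def CohNielsen (U₁ U₂ : List X) (lt : BRel) (U₁' U₂' : List X) (lt' : BRel) : Prop :=
  ExtNielsen U₁ U₂ lt U₁' U₂' lt' ∧ Coherent U₁' U₂' lt'

/-- `(U₁, U₂, lt)` is (strongly) terminating: there is no infinite sequence of coherent
extended Nielsen transformations starting from it. -/
def Terminating (U₁ U₂ : List X) (lt : BRel) : Prop :=
  ¬ ∃ f : ℕ → List X × List X × BRel,
    f 0 = (U₁, U₂, lt) ∧
    ∀ n, CohNielsen (f n).1 (f n).2.1 (f n).2.2 (f (n + 1)).1 (f (n + 1)).2.1 (f (n + 1)).2.2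

end ExtWordEq

namespace ExtWordEq

variable {X : Type*}

namespace BoundaryOrder

variable {U₁ U₂ : List X} {lt : BRel}

lemma lt_of_incomp_of_lt (h : BoundaryOrder U₁ U₂ lt) {a b c : ℕ × ℕ} (ha : EBoundary U₁ U₂ a)
    (hb : EBoundary U₁ U₂ b) (hc : EBoundary U₁ U₂ c) (hab : Incomp lt a b) (hbc : lt b c) :
    lt a c := by
  by_contra hac
  by_cases hca : lt c a
  · exact hab.2 (h.trans _ _ _ hb hc ha hbc hca)
  · exact (h.incomp_trans _ _ _ hb ha hc ⟨hab.2, hab.1⟩ ⟨hac, hca⟩).1 hbc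

lemma lt_of_snd_lt (h : BoundaryOrder U₁ U₂ lt) {i m n : ℕ} (hi : i = 1 ∨ i = 2) (hmn : m < n)
    (hn : n ≤ (word U₁ U₂ i).length) : lt (i, m) (i, n) := by
  induction n, hmn using Nat.le_induction with
  | base => exact h.succ i m ⟨hi, hn⟩
  | succ n hmn ih =>
    exact h.trans (i, m) (i, n) (i, n + 1) ⟨hi, by dsimp only; omega⟩ ⟨hi, by dsimp only; omega⟩
      ⟨hi, hn⟩ (ih (by omega)) (h.succ i n ⟨hi, hn⟩)

lemma zero_lt (h : BoundaryOrder U₁ U₂ lt) {i : ℕ} (hi : i = 1 ∨ i = 2) {b : ℕ × ℕ}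
    (hb : Boundary U₁ U₂ b) : lt (i, 0) b := by
  obtain ⟨i', n⟩ := b
  obtain ⟨hi', hn, hnl⟩ := hb
  have h0 : lt (i', 0) (i', n) := h.lt_of_snd_lt hi' hn hnl
  by_cases hii : i = i'
  · exact hii ▸ h0
  · have hinc : Incomp lt (i, 0) (i', 0) := by
      rcases hi with rfl | rfl <;> rcases hi' with rfl | rfl
      · exact absurd rfl hii
      · exact h.bot
      · exact ⟨h.bot.2, h.bot.1⟩
      · exact absurd rfl hii
    exact h.lt_of_incomp_of_lt (b := (i', 0)) ⟨hi, Nat.zero_le _⟩ ⟨hi', Nat.zero_le _⟩ ⟨hi', hnl⟩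
      hinc h0

end BoundaryOrder

lemma sum_map_take_mono (L : X → ℕ) (l : List X) {m n : ℕ} (h : m ≤ n) :
    ((l.take m).map L).sum ≤ ((l.take n).map L).sum := by
  simpa only [List.map_take] using List.monotone_sum_take _ h

lemma prefixLen_mono (U₁ U₂ : List X) (L : X → ℕ) (i : ℕ) {m n : ℕ} (h : m ≤ n) :
    prefixLen U₁ U₂ L (i, m) ≤ prefixLen U₁ U₂ L (i, n) :=
  sum_map_take_mono L _ h

lemma prefixLen_pos {U₁ U₂ : List X} {L : X → ℕ} (hL : ∀ z, 0 < L z) {b : ℕ × ℕ}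
    (hb : Boundary U₁ U₂ b) : 0 < prefixLen U₁ U₂ L b := by
  obtain ⟨i, j⟩ := b
  obtain ⟨-, hj, hjl⟩ := hb
  obtain ⟨z, l, hzl⟩ := List.exists_cons_of_length_pos (show 0 < (word U₁ U₂ i).length by
    dsimp only at hjl; omega)
  calc 0 < L z := hL z
    _ = prefixLen U₁ U₂ L (i, 1) := by simp [prefixLen, hzl]
    _ ≤ prefixLen U₁ U₂ L (i, j) := prefixLen_mono U₁ U₂ L i hj

def CoherentWith (U₁ U₂ : List X) (lt : BRel) (L : X → ℕ) : Prop :=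
  (∀ z, 0 < L z) ∧ ∀ a b, Boundary U₁ U₂ a → Boundary U₁ U₂ b →
    (lt a b ↔ prefixLen U₁ U₂ L a < prefixLen U₁ U₂ L b)

namespace CoherentWith

variable {U₁ U₂ : List X} {lt : BRel} {L : X → ℕ}

lemma prefixLen_pred_lt (hL : CoherentWith U₁ U₂ lt L) {a b : ℕ × ℕ} (ha : Boundary U₁ U₂ a)
    (hb : Boundary U₁ U₂ b) (h : lt (a.1, a.2 - 1) b) :
    prefixLen U₁ U₂ L (a.1, a.2 - 1) < prefixLen U₁ U₂ L b := by
  obtain ⟨i, j⟩ := a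
  obtain ⟨hi, hj, hjl⟩ := ha
  dsimp only at hi hj hjl
  rcases (show j = 1 ∨ 2 ≤ j by omega) with rfl | hj
  · simpa [prefixLen] using prefixLen_pos hL.1 hb
  · exact (hL.2 (i, j - 1) b ⟨hi, by omega, show j - 1 ≤ (word U₁ U₂ i).length by omega⟩ hb).1 h

lemma lt_pred_of_prefixLen_lt (hL : CoherentWith U₁ U₂ lt L) (hbo : BoundaryOrder U₁ U₂ lt)
    {a b : ℕ × ℕ} (ha : Boundary U₁ U₂ a) (hb : Boundary U₁ U₂ b)
    (h : prefixLen U₁ U₂ L (a.1, a.2 - 1) < prefixLen U₁ U₂ L b) : lt (a.1, a.2 - 1) b := by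
  obtain ⟨i, j⟩ := a
  obtain ⟨hi, hj, hjl⟩ := ha
  dsimp only at hi hj hjl
  rcases (show j = 1 ∨ 2 ≤ j by omega) with rfl | hj
  · exact hbo.zero_lt hi hb
  · exact (hL.2 (i, j - 1) b ⟨hi, by omega, show j - 1 ≤ (word U₁ U₂ i).length by omega⟩ hb).2 h

lemma fst_ne_of_cuts (hL : CoherentWith U₁ U₂ lt L) {a b : ℕ × ℕ} (h : Cuts U₁ U₂ lt a b) :
    a.1 ≠ b.1 := by
  obtain ⟨ha, hb, hne, hab, hba⟩ := h
  have hab' := hL.prefixLen_pred_lt ha hb hab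
  have hba' := hL.prefixLen_pred_lt hb ha hba
  obtain ⟨i, j⟩ := a
  obtain ⟨i', j'⟩ := b
  rintro (rfl : i = i')
  rcases lt_trichotomy j j' with hjj | rfl | hjj
  · have := prefixLen_mono U₁ U₂ L i (show j ≤ j' - 1 by omega)
    exact absurd hba' (by simp only at this ⊢; omega)
  · exact hne rfl
  · have := prefixLen_mono U₁ U₂ L i (show j' ≤ j - 1 by omega)
    exact absurd hab' (by simp only at this ⊢; omega)

end CoherentWith

section

variable {x y : X} {t₁ t₂ : List X}

lemma lt_prefixLen_of_bminus {w : X → ℕ} (hw : ∀ z, 0 < w z) (hwyx : w y < w x)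
    {A : ℕ × ℕ} (hA : Bminus (x :: t₁) (y :: t₂) A) : w y < prefixLen (x :: t₁) (y :: t₂) w A := by
  obtain ⟨i, k⟩ := A
  obtain ⟨⟨hi, hk, hkW⟩, hA21⟩ := hA
  dsimp only at hi hk hkW
  rcases hi with rfl | rfl
  · calc w y < prefixLen (x :: t₁) (y :: t₂) w (1, 1) := by simpa [prefixLen, word] using hwyx
      _ ≤ _ := prefixLen_mono _ _ w 1 hk
  · have hk2 : 2 ≤ k := by
      rcases (show k = 1 ∨ 2 ≤ k by omega) with rfl | hk2
      · exact absurd rfl hA21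
      · exact hk2
    obtain ⟨z, t, rfl⟩ : ∃ z t, t₂ = z :: t := List.exists_cons_of_length_pos (by
      simp [word] at hkW; omega)
    calc w y < prefixLen (x :: t₁) (y :: z :: t) w (2, 2) := by simpa [prefixLen, word] using hw z
      _ ≤ _ := prefixLen_mono _ _ w 2 hk2

lemma prefixLen_lt_prefixLen_iff_of_two_one {w : X → ℕ} (hw : ∀ z, 0 < w z) (hwyx : w y < w x)
    {A B : ℕ × ℕ} (hA : Boundary (x :: t₁) (y :: t₂) A) (hB : Boundary (x :: t₁) (y :: t₂) B)
    (h : A = (2, 1) ∨ B = (2, 1)) :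
    prefixLen (x :: t₁) (y :: t₂) w A < prefixLen (x :: t₁) (y :: t₂) w B ↔
      A = (2, 1) ∧ B ≠ (2, 1) := by
  have h21 : prefixLen (x :: t₁) (y :: t₂) w (2, 1) = w y := by simp [prefixLen, word]
  by_cases hA21 : A = (2, 1) <;> by_cases hB21 : B = (2, 1)
  · simp [hA21, hB21]
  · simpa [hA21, hB21, h21] using lt_prefixLen_of_bminus hw hwyx ⟨hB, hB21⟩
  · simpa [hA21, hB21, h21] using (lt_prefixLen_of_bminus hw hwyx ⟨hA, hA21⟩).le
  · tauto

lemma CoherentWith.lt_of_lt_two_one {lt : BRel} {L : X → ℕ}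
    (hL : CoherentWith (x :: t₁) (y :: t₂) lt L) (h : lt (2, 1) (1, 1)) : L y < L x := by
  simpa [prefixLen, word] using
    (hL.2 (2, 1) (1, 1) ⟨by simp, le_rfl, by simp [word]⟩ ⟨by simp, le_rfl, by simp [word]⟩).1 h

end

section Expand

variable [DecidableEq X] {x y : X}

lemma expand_singleton_self : expand x y [x] = [y, x] := by
  simp [expand]

lemma expand_singleton_of_ne {z : X} (hz : z ≠ x) : expand x y [z] = [z] := by
  simp [expand, hz]

lemma expand_cons (z : X) (l : List X) :
    expand x y (z :: l) = expand x y [z] ++ expand x y l := by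
  simp [expand]

lemma expand_append (l₁ l₂ : List X) :
    expand x y (l₁ ++ l₂) = expand x y l₁ ++ expand x y l₂ :=
  List.flatMap_append

lemma count_expand (hxy : y ≠ x) (l : List X) : (expand x y l).count x = l.count x := by
  induction l with
  | nil => rfl
  | cons z l ih =>
    rw [expand_cons, List.count_append, ih]
    by_cases hz : z = x <;> simp [expand, hz, hxy, add_comm]

lemma length_expand (l : List X) : (expand x y l).length = l.length + l.count x := by
  induction l with
  | nil => rfl
  | cons z l ih =>
    rw [expand_cons, List.length_append, ih]
    by_cases hz : z = x <;> simp [expand, hz] <;> omega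

def substLen (x y : X) (L : X → ℕ) (z : X) : ℕ := ((expand x y [z]).map L).sum

lemma substLen_self (L : X → ℕ) : substLen x y L x = L y + L x := by
  simp [substLen, expand_singleton_self]

lemma substLen_of_ne (L : X → ℕ) {z : X} (hz : z ≠ x) : substLen x y L z = L z := by
  simp [substLen, expand_singleton_of_ne hz]

lemma substLen_pos {L : X → ℕ} (hL : ∀ z, 0 < L z) (z : X) : 0 < substLen x y L z := by
  by_cases hz : z = x
  · rw [hz, substLen_self]; exact Nat.add_pos_right _ (hL x)
  · rw [substLen_of_ne L hz]; exact hL z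

lemma sum_map_expand (L : X → ℕ) (l : List X) :
    ((expand x y l).map L).sum = (l.map (substLen x y L)).sum := by
  induction l with
  | nil => rfl
  | cons z l ih => rw [expand_cons, List.map_append, List.sum_append, ih]; rfl

lemma take_length_expand_take (W : List X) (k : ℕ) :
    (expand x y W).take (expand x y (W.take k)).length = expand x y (W.take k) := by
  have hsplit : expand x y W = expand x y (W.take k) ++ expand x y (W.drop k) := by
    rw [← expand_append, List.take_append_drop]
  rw [hsplit, List.take_left' rfl]

-- The `p`-th letter of `T(W)` comes from the `(k+1)`-th letter of `W`, and `k + 1` is `p`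
-- minus the number of `x`s among the first `p` letters of `T(W)`.
lemma exists_letter_of_le_length_expand (hxy : y ≠ x) (W : List X) {p : ℕ} (hp : 0 < p)
    (hpW : p ≤ (expand x y W).length) :
    ∃ k < W.length, (expand x y (W.take k)).length < p ∧
      p ≤ (expand x y (W.take (k + 1))).length ∧
      p = ((expand x y W).take p).count x + (k + 1) := by
  induction W generalizing p with
  | nil => simp [expand] at hpW; omega
  | cons z W ih =>
    rw [expand_cons, List.length_append] at hpW
    rw [expand_cons]
    by_cases hpz : p ≤ (expand x y [z]).length
    · refine ⟨0, by simp, by simpa [expand] using hp, by simpa using hpz, ?_⟩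
      rw [List.take_append_of_le_length hpz]
      by_cases hzx : z = x
      · rw [hzx, expand_singleton_self] at hpz ⊢
        rw [List.length_cons, List.length_singleton] at hpz
        interval_cases p <;> simp [hxy]
      · rw [expand_singleton_of_ne hzx] at hpz ⊢
        rw [List.length_singleton] at hpz
        interval_cases p; simp [hzx]
    · obtain ⟨k, hk, hlo, hhi, hcount⟩ :=
        ih (p := p - (expand x y [z]).length) (by omega) (by omega)
      have hz : (expand x y [z]).length = (expand x y [z]).count x + 1 := by
        rw [length_expand, count_expand hxy]; simp [add_comm]
      refine ⟨k + 1, by simpa using hk, ?_, ?_, ?_⟩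
      · rw [List.take_succ_cons, expand_cons, List.length_append]; omega
      · rw [List.take_succ_cons, expand_cons, List.length_append]; omega
      · rw [List.take_append, List.take_of_length_le (by omega), List.count_append]; omega

end Expand

section Transformation

variable [DecidableEq X] {x y : X}

lemma nu_bounds (hxy : y ≠ x) (L : X → ℕ) {W W' : List X} (hW : expand x y W = y :: W')
    {j : ℕ} (hj : j ≤ W'.length) :
    j - (W'.take j).count x < W.length ∧
    ((W'.take j).map L).sum + L y ≤
      ((W.take (j - (W'.take j).count x + 1)).map (substLen x y L)).sum ∧
    ((W.take (j - (W'.take j).count x)).map (substLen x y L)).sum ≤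
      ((W'.take (j - 1)).map L).sum + L y := by
  obtain ⟨k, hk, hlo, hhi, hcount⟩ :=
    exists_letter_of_le_length_expand hxy W (p := j + 1) (by omega) (by simp [hW, hj])
  rw [hW, List.take_succ_cons, List.count_cons_of_ne hxy] at hcount
  have hkj : j - (W'.take j).count x = k := by omega
  have hsum (n : ℕ) : ((W.take n).map (substLen x y L)).sum =
      (((y :: W').take (expand x y (W.take n)).length).map L).sum := by
    rw [← hW, take_length_expand_take, sum_map_expand]
  refine ⟨hkj ▸ hk, ?_, ?_⟩
  · rw [hkj, hsum]
    calc ((W'.take j).map L).sum + L y = (((y :: W').take (j + 1)).map L).sum := by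
          simp [add_comm]
      _ ≤ _ := sum_map_take_mono L _ hhi
  · rw [hkj, hsum]
    calc _ ≤ (((y :: W').take j).map L).sum := sum_map_take_mono L _ (by omega)
      _ ≤ ((W'.take (j - 1)).map L).sum + L y := by cases j <;> simp [add_comm]

lemma cons_take_eq_expand_take {W W' : List X} (hW : expand x y W = y :: W')
    {k : ℕ} (hk : 0 < k) (hkW : k ≤ W.length) :
    y :: W'.take (k + (W.take k).count x - 1) = expand x y (W.take k) := by
  have h := take_length_expand_take (x := x) (y := y) W k
  rw [hW, length_expand, List.length_take, min_eq_left hkW,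
    show k + (W.take k).count x = k + (W.take k).count x - 1 + 1 by omega,
    List.take_succ_cons] at h
  exact h

variable {t₁ t₂ U₁' U₂' : List X}

lemma nu_spec (hxy : y ≠ x) {U₁ U₂ : List X}
    (hE : ∀ i, expand x y (word U₁ U₂ i) = y :: word U₁' U₂' i) (L : X → ℕ) {c : ℕ × ℕ}
    (hc : Boundary U₁' U₂' c) :
    Boundary U₁ U₂ (nu U₁' U₂' x c) ∧
    prefixLen U₁' U₂' L c + L y ≤ prefixLen U₁ U₂ (substLen x y L) (nu U₁' U₂' x c) ∧
    prefixLen U₁ U₂ (substLen x y L) ((nu U₁' U₂' x c).1, (nu U₁' U₂' x c).2 - 1) ≤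
      prefixLen U₁' U₂' L (c.1, c.2 - 1) + L y := by
  obtain ⟨i, j⟩ := c
  obtain ⟨hi, -, hj⟩ := hc
  dsimp only at hj
  obtain ⟨hk, hup, hdown⟩ := nu_bounds hxy L (hE i) hj
  exact ⟨⟨hi, by simp [nu], by simp only [nu]; omega⟩, hup, hdown⟩

lemma mu_spec (hxy : y ≠ x)
    (hE : ∀ i, expand x y (word (x :: t₁) (y :: t₂) i) = y :: word U₁' U₂' i) (L : X → ℕ)
    {A : ℕ × ℕ} (hA : Bminus (x :: t₁) (y :: t₂) A) :
    Boundary U₁' U₂' (mu (x :: t₁) (y :: t₂) x A) ∧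
    nu U₁' U₂' x (mu (x :: t₁) (y :: t₂) x A) = A ∧
    prefixLen U₁' U₂' L (mu (x :: t₁) (y :: t₂) x A) + L y =
      prefixLen (x :: t₁) (y :: t₂) (substLen x y L) A := by
  obtain ⟨i, k⟩ := A
  obtain ⟨⟨hi, hk, hkW⟩, hA21⟩ := hA
  dsimp only at hk hkW
  -- `μ(1,1) = (1,1)` as `U₁` starts with `x`; only `(2,1)` would be sent to `(2,0)`.
  have htwo : 2 ≤ k + ((word (x :: t₁) (y :: t₂) i).take k).count x := by
    rcases (show k = 1 ∨ 2 ≤ k by omega) with rfl | hk2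
    · rcases hi with rfl | rfl
      · simp [word]
      · exact absurd rfl hA21
    · omega
  have key := cons_take_eq_expand_take (hE i) hk hkW
  have hlen := congrArg List.length key
  have hcount := congrArg (List.count x) key
  have hsum := congrArg (fun l => (l.map L).sum) key
  rw [List.count_cons_of_ne hxy, count_expand hxy] at hcount
  simp only [List.map_cons, List.sum_cons, sum_map_expand] at hsum
  simp only [List.length_cons, List.length_take, length_expand, min_eq_left hkW] at hlen
  refine ⟨⟨hi, by simp only [mu]; omega, by simp only [mu]; omega⟩, ?_, ?_⟩
  · simp only [mu, nu, hcount]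
    congr 1
    omega
  · simp only [mu, prefixLen]
    omega

-- On `B⁻` the compatibility of `<'` with `<` through `μ` does the work, as
-- `L''(A) = L'(μ A) + L'(y)`; the remaining boundary `(2,1)` is the minimum of both orders.
lemma coherentWith_substLen (hxy : y ≠ x)
    (hE : ∀ i, expand x y (word (x :: t₁) (y :: t₂) i) = y :: word U₁' U₂' i)
    {lt lt' : BRel} {L L' : X → ℕ} (hL : CoherentWith (x :: t₁) (y :: t₂) lt L)
    (hLyx : L y < L x) (hL' : CoherentWith U₁' U₂' lt' L')
    (hcompat : ∀ a b, Bpminus (x :: t₁) (y :: t₂) x a → Bpminus (x :: t₁) (y :: t₂) x b →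
      (lt' a b ↔ lt (nu U₁' U₂' x a) (nu U₁' U₂' x b))) :
    CoherentWith (x :: t₁) (y :: t₂) lt (substLen x y L') := by
  have hpos := substLen_pos (x := x) (y := y) hL'.1
  have hyx : substLen x y L' y < substLen x y L' x := by
    rw [substLen_of_ne L' hxy, substLen_self]; exact Nat.lt_add_of_pos_right (hL'.1 x)
  refine ⟨hpos, fun A B hA hB => ?_⟩
  by_cases h : A = (2, 1) ∨ B = (2, 1)
  · rw [hL.2 A B hA hB, prefixLen_lt_prefixLen_iff_of_two_one hL.1 hLyx hA hB h,
      prefixLen_lt_prefixLen_iff_of_two_one hpos hyx hA hB h]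
  · obtain ⟨hA21, hB21⟩ := not_or.1 h
    obtain ⟨hAb, hnuA, hsumA⟩ := mu_spec hxy hE L' ⟨hA, hA21⟩
    obtain ⟨hBb, hnuB, hsumB⟩ := mu_spec hxy hE L' ⟨hB, hB21⟩
    have hcomp := hcompat _ _ ⟨A, ⟨hA, hA21⟩, rfl⟩ ⟨B, ⟨hB, hB21⟩, rfl⟩
    rw [hnuA, hnuB] at hcomp
    rw [← hcomp, hL'.2 _ _ hAb hBb, ← hsumA, ← hsumB]
    omega

lemma lt_pred_nu_of_lt_pred (hxy : y ≠ x) {U₁ U₂ : List X}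
    (hE : ∀ i, expand x y (word U₁ U₂ i) = y :: word U₁' U₂' i) {lt lt' : BRel} {L' : X → ℕ}
    (hbo : BoundaryOrder U₁ U₂ lt) (hL'' : CoherentWith U₁ U₂ lt (substLen x y L'))
    (hL' : CoherentWith U₁' U₂' lt' L') {c d : ℕ × ℕ} (hc : Boundary U₁' U₂' c)
    (hd : Boundary U₁' U₂' d) (h : lt' (c.1, c.2 - 1) d) :
    lt ((nu U₁' U₂' x c).1, (nu U₁' U₂' x c).2 - 1) (nu U₁' U₂' x d) := by
  obtain ⟨hcB, -, hcdown⟩ := nu_spec hxy hE L' hc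
  obtain ⟨hdB, hdup, -⟩ := nu_spec hxy hE L' hd
  have := hL'.prefixLen_pred_lt hc hd h
  exact hL''.lt_pred_of_prefixLen_lt hbo hcB hdB (by omega)

end Transformation

variable [DecidableEq X]

theorem cuts_nu_of_cuts_general (U₁ U₂ U₁' U₂' : List X) (lt lt' : BRel) (x y : X)
    (hbo : BoundaryOrder U₁ U₂ lt)
    (hcoh : Coherent U₁ U₂ lt)
    (hII : NielsenIIxy U₁ U₂ lt U₁' U₂' lt' x y) (hcoh' : Coherent U₁' U₂' lt') :
    ∀ a b, Cuts U₁' U₂' lt' a b →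
      Cuts U₁ U₂ lt (nu U₁' U₂' x a) (nu U₁' U₂' x b) := by
  obtain ⟨hx, hy, hlt, hU₁', hU₂', -, hcompat⟩ := hII
  obtain ⟨t₁, rfl⟩ := List.head?_eq_some_iff.1 hx
  obtain ⟨t₂, rfl⟩ := List.head?_eq_some_iff.1 hy
  obtain ⟨L, hL⟩ : ∃ L, CoherentWith (x :: t₁) (y :: t₂) lt L := hcoh
  obtain ⟨L', hL'⟩ : ∃ L', CoherentWith U₁' U₂' lt' L' := hcoh'
  have hLyx : L y < L x := hL.lt_of_lt_two_one hlt
  have hxy : y ≠ x := fun h => hLyx.ne (congrArg L h)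
  have hE : ∀ i, expand x y (word (x :: t₁) (y :: t₂) i) = y :: word U₁' U₂' i := by
    intro i
    by_cases hi : i = 1 <;> simp [word, hi, hU₁', hU₂', expand, hxy]
  have hL'' := coherentWith_substLen hxy hE hL hLyx hL' hcompat
  intro a b hab
  have ⟨ha, hb, _, hlt_ab, hlt_ba⟩ := hab
  exact ⟨(nu_spec hxy hE L' ha).1, (nu_spec hxy hE L' hb).1,
    fun h => hL'.fst_ne_of_cuts hab (Prod.ext_iff.1 h).1,
    lt_pred_nu_of_lt_pred hxy hE hbo hL'' hL' ha hb hlt_ab,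
    lt_pred_nu_of_lt_pred hxy hE hbo hL'' hL' hb ha hlt_ba⟩

/-- **Lemma.** After a case II coherent extended Nielsen transformation, if `(i,j)`
cuts `(i',j')` with respect to `(U₁',U₂',<')`, then `(i,ν(i,j))` cuts `(i',ν(i',j'))`
with respect to `(U₁,U₂,<)`. -/
theorem cuts_nu_of_cuts (U₁ U₂ U₁' U₂' : List X) (lt lt' : BRel) (x y : X)
    (h₁ : U₁ ≠ []) (h₂ : U₂ ≠ []) (hbo : BoundaryOrder U₁ U₂ lt)
    (hcoh : Coherent U₁ U₂ lt)
    (hII : NielsenIIxy U₁ U₂ lt U₁' U₂' lt' x y) (hcoh' : Coherent U₁' U₂' lt') :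
    ∀ a b, Cuts U₁' U₂' lt' a b →
      Cuts U₁ U₂ lt (nu U₁' U₂' x a) (nu U₁' U₂' x b) :=
  cuts_nu_of_cuts_general U₁ U₂ U₁' U₂' lt lt' x y hbo hcoh hII hcoh'

end ExtWordEq
end

section
/- Let (U₁,U₂,<) be an extended word equation. If the cut graph G_{U₁,U₂,<} is cyclic, then there is some cycle of minimum length in G_{U₁,U₂,<} that is pointed with respect to some auxiliary set. -/
open scoped Classical

/-!
Take a shortest cycle together with its cut witnesses, and a `<`-minimal element `m` among its
vertices and witnesses. If `m` is a vertex, rotate the cycle to start at `m`. Otherwise, since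
cutting and mirroring are symmetric, the witnesses traversed backwards form a cycle of the same
length whose witnesses are the original vertices; rotate that cycle to start at `m`.
-/

theorem Set.Finite.exists_not_rel_of_irrefl_of_trans {α : Type*} {r : α → α → Prop} {s : Set α}
    (hs : s.Finite) (hne : s.Nonempty) (irrefl : ∀ a ∈ s, ¬ r a a)
    (trans : ∀ a ∈ s, ∀ b ∈ s, ∀ c ∈ s, r a b → r b c → r a c) :
    ∃ m ∈ s, ∀ a ∈ s, ¬ r a m := by
  let r' : s → s → Prop := fun a b => r a b
  have : Finite s := hs.to_subtype
  have : IsTrans s r' := ⟨fun a b c => trans a a.2 b b.2 c c.2⟩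
  have : Std.Irrefl r' := ⟨fun a => irrefl a a.2⟩
  obtain ⟨m, -, hm⟩ :=
    (Finite.wellFounded_of_trans_of_irrefl r').has_min Set.univ ⟨⟨_, hne.some_mem⟩, trivial⟩
  exact ⟨m, m.2, fun a ha => hm ⟨a, ha⟩ trivial⟩

namespace ExtWordEq

section CutWalk

variable {X : Type*} {U₁ U₂ : List X} {lt : BRel}

theorem Boundary.eBoundary {b : ℕ × ℕ} (h : Boundary U₁ U₂ b) : EBoundary U₁ U₂ b :=
  ⟨h.1, h.2.2⟩

theorem Cuts.symm {a b : ℕ × ℕ} (h : Cuts U₁ U₂ lt a b) : Cuts U₁ U₂ lt b a :=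
  ⟨h.2.1, h.1, h.2.2.1.symm, h.2.2.2.2, h.2.2.2.1⟩

theorem Mirrors.symm {a b : ℕ × ℕ} (h : Mirrors U₁ U₂ lt a b) : Mirrors U₁ U₂ lt b a := by
  obtain ⟨ha, hb, hl, hd⟩ := h
  refine ⟨hb, ha, hl.symm, ?_⟩
  unfold Incomp at *
  tauto

/-- Indexing by `ZMod n` turns rotating and reversing a cycle into reindexing. -/
def IsCutWalk (U₁ U₂ : List X) (lt : BRel) {n : ℕ} (w c : ZMod n → ℕ × ℕ) : Prop :=
  ∀ k, Cuts U₁ U₂ lt (w k) (c k) ∧ Mirrors U₁ U₂ lt (c k) (w (k + 1))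

variable {n : ℕ} {w c : ZMod n → ℕ × ℕ}

theorem IsCutWalk.eBoundary (h : IsCutWalk U₁ U₂ lt w c) {b : ℕ × ℕ}
    (hb : b ∈ Set.range w ∪ Set.range c) : EBoundary U₁ U₂ b := by
  rcases hb with ⟨k, rfl⟩ | ⟨k, rfl⟩
  exacts [(h k).1.1.eBoundary, (h k).1.2.1.eBoundary]

theorem IsCutWalk.comp_add_left (h : IsCutWalk U₁ U₂ lt w c) (k₀ : ZMod n) :
    IsCutWalk U₁ U₂ lt (fun k => w (k₀ + k)) (fun k => c (k₀ + k)) := fun k => by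
  simpa only [add_assoc] using h (k₀ + k)

theorem IsCutWalk.reverse (h : IsCutWalk U₁ U₂ lt w c) :
    IsCutWalk U₁ U₂ lt (fun k => c (-k)) (fun k => w (-k)) := fun k => by
  have hmir := (h (-(k + 1))).2.symm
  rw [show -(k + 1) + 1 = -k by ring] at hmir
  exact ⟨(h (-k)).1.symm, hmir⟩

theorem IsCutWalk.isCycle (hn : 0 < n) (h : IsCutWalk U₁ U₂ lt w c) :
    IsCycle U₁ U₂ lt n (fun j : ℕ => w j) :=
  ⟨hn, by simp, fun k _ => ⟨c k, by simpa using h k⟩⟩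

theorem IsCycle.exists_isCutWalk {w : ℕ → ℕ × ℕ} (h : IsCycle U₁ U₂ lt n w) :
    ∃ c : ZMod n → ℕ × ℕ, IsCutWalk U₁ U₂ lt (fun k => w k.val) c := by
  obtain ⟨hn, hclosed, hedge⟩ := h
  have : NeZero n := ⟨hn.ne'⟩
  have hsucc : ∀ k : ZMod n, w (k + 1).val = w (k.val + 1) := by
    intro k
    rw [show k + 1 = ((k.val + 1 : ℕ) : ZMod n) by push_cast [ZMod.natCast_zmod_val]; rfl,
      ZMod.val_natCast]
    rcases Nat.lt_or_ge (k.val + 1) n with hlt | hge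
    · rw [Nat.mod_eq_of_lt hlt]
    · rw [show k.val + 1 = n by have := ZMod.val_lt k; omega, Nat.mod_self, hclosed]
  have hwit : ∀ k : ZMod n, ∃ d,
      Cuts U₁ U₂ lt (w k.val) d ∧ Mirrors U₁ U₂ lt d (w (k + 1).val) := by
    intro k
    rw [hsucc]
    exact hedge k.val (ZMod.val_lt k)
  choose c hc using hwit
  exact ⟨c, hc⟩

def IsPointedCycle (U₁ U₂ : List X) (lt : BRel) (n : ℕ) (w c : ℕ → ℕ × ℕ) : Prop :=
  IsCycle U₁ U₂ lt n w ∧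
    (∀ k < n, Cuts U₁ U₂ lt (w k) (c k) ∧ Mirrors U₁ U₂ lt (c k) (w (k + 1))) ∧
    (∀ k < n, ¬ lt (w k) (w 0) ∧ ¬ lt (c k) (w 0))

theorem IsCutWalk.exists_pointed_cycle (hn : 0 < n) (h : IsCutWalk U₁ U₂ lt w c) (k₀ : ZMod n)
    (hmin : ∀ k, ¬ lt (w k) (w k₀) ∧ ¬ lt (c k) (w k₀)) :
    ∃ w' c' : ℕ → ℕ × ℕ, IsPointedCycle U₁ U₂ lt n w' c' := by
  have h' := h.comp_add_left k₀
  refine ⟨fun j => w (k₀ + j), fun j => c (k₀ + j), h'.isCycle hn, fun k _ => ?_,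
    fun k _ => ?_⟩
  · simpa using h' k
  · simpa using hmin (k₀ + k)

theorem IsCutWalk.exists_pointed_cycle_of_minimal (hn : 0 < n) (h : IsCutWalk U₁ U₂ lt w c)
    {m : ℕ × ℕ} (hm : m ∈ Set.range w ∪ Set.range c)
    (hmin : ∀ b ∈ Set.range w ∪ Set.range c, ¬ lt b m) :
    ∃ w' c' : ℕ → ℕ × ℕ, IsPointedCycle U₁ U₂ lt n w' c' := by
  rcases hm with ⟨k₀, rfl⟩ | ⟨k₀, rfl⟩
  · exact h.exists_pointed_cycle hn k₀ fun k =>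
      ⟨hmin _ (Or.inl ⟨k, rfl⟩), hmin _ (Or.inr ⟨k, rfl⟩)⟩
  · refine h.reverse.exists_pointed_cycle hn (-k₀) fun k => ?_
    simp only [neg_neg]
    exact ⟨hmin _ (Or.inr ⟨-k, rfl⟩), hmin _ (Or.inl ⟨-k, rfl⟩)⟩

end CutWalk

variable {X : Type*} [DecidableEq X]

/-- **Lemma.** If the cut graph of an extended word equation is cyclic, then it
contains a cycle of minimum length that is pointed with respect to some
auxiliary set. -/
theorem exists_pointed_min_cycle (U₁ U₂ : List X) (lt : BRel)
    (hbo : BoundaryOrder U₁ U₂ lt)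
    (hcyc : ∃ n w, IsCycle U₁ U₂ lt n w) :
    ∃ n w, IsCycle U₁ U₂ lt n w ∧
      (∀ (n' : ℕ) (w' : ℕ → ℕ × ℕ), IsCycle U₁ U₂ lt n' w' → n ≤ n') ∧
      ∃ c : ℕ → ℕ × ℕ,
        (∀ k < n, Cuts U₁ U₂ lt (w k) (c k) ∧ Mirrors U₁ U₂ lt (c k) (w (k + 1))) ∧
        (∀ k < n, ¬ lt (w k) (w 0) ∧ ¬ lt (c k) (w 0)) := by
  obtain ⟨w, hw⟩ := Nat.find_spec hcyc
  have hshortest : ∀ n' w', IsCycle U₁ U₂ lt n' w' → Nat.find hcyc ≤ n' :=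
    fun n' w' h => Nat.find_min' hcyc ⟨w', h⟩
  obtain ⟨c, hwalk⟩ := hw.exists_isCutWalk
  have : NeZero (Nat.find hcyc) := ⟨hw.1.ne'⟩
  have hfin : (Set.range (fun k : ZMod (Nat.find hcyc) => w k.val) ∪ Set.range c).Finite :=
    (Set.finite_range _).union (Set.finite_range c)
  obtain ⟨m, hm, hmin⟩ := hfin.exists_not_rel_of_irrefl_of_trans (r := lt) ⟨_, Or.inl ⟨0, rfl⟩⟩
    (fun a ha => hbo.irrefl a (hwalk.eBoundary ha))
    (fun a ha b hb d hd => hbo.trans a b d (hwalk.eBoundary ha) (hwalk.eBoundary hb)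
      (hwalk.eBoundary hd))
  obtain ⟨w', c', hcycle, hpointed⟩ := hwalk.exists_pointed_cycle_of_minimal hw.1 hm hmin
  exact ⟨_, w', hcycle, hshortest, c', hpointed⟩

end ExtWordEq
end
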